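/- arXiv:1101.0587 — 2 statements merged into one kernel-verified Lean document; each statement's English description precedes it below -/
import Mathlib

section
/- Let k ≥ 1. For all z1, z2, z3 ∈ ℂ one has det M(z3, z2, z1) = (−1)^k · det M(z1, z2, z3). -/
/-! The entries of `M(z1, z2, z3)` are the integrals `∫_{z1}^{z2} t^n dt` (first `k` columns) and
`∫_{z1}^{z3} t^n dt` (last `k` columns). Exchanging `z1` and `z3` turns them into
`∫_{z3}^{z2} = ∫_{z1}^{z2} - ∫_{z1}^{z3}` and `∫_{z3}^{z1} = -∫_{z1}^{z3}`, i.e. multiplies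
`M` on the right by the block matrix `[[1, 0], [-1, -1]]`, of determinant `(-1)^k`. -/

/-- The `2k × 2k` matrix `M(z1, z2, z3)` of Mirebeau: for `1 ≤ i ≤ 2k` and `1 ≤ j ≤ k`
(here written with 0-based indices), `M_{i,j} = (z2^{i+j-1} - z1^{i+j-1})/(i+j-1)` and
`M_{i,j+k} = (z3^{i+j-1} - z1^{i+j-1})/(i+j-1)`. -/
noncomputable def Mmat (k : ℕ) (z1 z2 z3 : ℂ) : Matrix (Fin (2 * k)) (Fin (2 * k)) ℂ :=
  Matrix.of fun i j =>
    if (j : ℕ) < k then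
      (z2 ^ ((i : ℕ) + (j : ℕ) + 1) - z1 ^ ((i : ℕ) + (j : ℕ) + 1)) /
        (((i : ℕ) + (j : ℕ) + 1 : ℕ) : ℂ)
    else
      (z3 ^ ((i : ℕ) + ((j : ℕ) - k) + 1) - z1 ^ ((i : ℕ) + ((j : ℕ) - k) + 1)) /
        (((i : ℕ) + ((j : ℕ) - k) + 1 : ℕ) : ℂ)

namespace Matrix

variable {R n : Type*} [CommRing R] [Fintype n] [DecidableEq n]

theorem det_fromCols_sub_neg (A C : Matrix (n ⊕ n) n R) :
    (fromCols (A - C) (-C)).det = (-1) ^ Fintype.card n * (fromCols A C).det := by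
  have hmul : fromCols (A - C) (-C) = fromCols A C * fromBlocks 1 0 (-1) (-1) := by
    rw [fromCols_mul_fromBlocks]
    simp only [Matrix.mul_one, Matrix.mul_zero, Matrix.mul_neg, zero_add, sub_eq_add_neg]
  rw [hmul, det_mul, det_fromBlocks_zero₁₂, det_one, det_neg, det_one, one_mul, mul_one, mul_comm]

end Matrix

/-- `∫_z^w t^n dt`. -/
noncomputable def integralPow (n : ℕ) (z w : ℂ) : ℂ :=
  (w ^ (n + 1) - z ^ (n + 1)) / ((n + 1 : ℕ) : ℂ)

theorem integralPow_eq_sub (n : ℕ) (z u w : ℂ) :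
    integralPow n u w = integralPow n z w - integralPow n z u := by
  simp only [integralPow]
  ring

theorem integralPow_swap (n : ℕ) (z w : ℂ) : integralPow n w z = -integralPow n z w := by
  simp only [integralPow]
  ring

def finTwoMulEquiv (k : ℕ) : Fin k ⊕ Fin k ≃ Fin (2 * k) :=
  finSumFinEquiv.trans (finCongr (two_mul k).symm)

noncomputable def integralPowBlock (k : ℕ) (z w : ℂ) : Matrix (Fin k ⊕ Fin k) (Fin k) ℂ :=
  Matrix.of fun i j => integralPow ((finTwoMulEquiv k i : ℕ) + j) z w

theorem Mmat_submatrix_finTwoMulEquiv (k : ℕ) (z1 z2 z3 : ℂ) :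
    (Mmat k z1 z2 z3).submatrix (finTwoMulEquiv k) (finTwoMulEquiv k) =
      Matrix.fromCols (integralPowBlock k z1 z2) (integralPowBlock k z1 z3) := by
  ext i (j | j) <;> simp [Mmat, integralPowBlock, integralPow, finTwoMulEquiv]

theorem integralPowBlock_eq_sub (k : ℕ) (z u w : ℂ) :
    integralPowBlock k u w = integralPowBlock k z w - integralPowBlock k z u := by
  ext i j
  exact integralPow_eq_sub _ z u w

theorem integralPowBlock_swap (k : ℕ) (z w : ℂ) :
    integralPowBlock k w z = -integralPowBlock k z w := by
  ext i j
  exact integralPow_swap _ z w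

theorem det_Mmat_swap_general (k : ℕ) (z1 z2 z3 : ℂ) :
    Matrix.det (Mmat k z3 z2 z1) = (-1 : ℂ) ^ k * Matrix.det (Mmat k z1 z2 z3) := by
  rw [← Matrix.det_submatrix_equiv_self (finTwoMulEquiv k) (Mmat k z3 z2 z1),
    ← Matrix.det_submatrix_equiv_self (finTwoMulEquiv k) (Mmat k z1 z2 z3),
    Mmat_submatrix_finTwoMulEquiv, Mmat_submatrix_finTwoMulEquiv,
    integralPowBlock_eq_sub k z1 z3 z2, integralPowBlock_swap k z1 z3,
    Matrix.det_fromCols_sub_neg, Fintype.card_fin]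

theorem det_Mmat_swap (k : ℕ) (hk : 1 ≤ k) (z1 z2 z3 : ℂ) :
    Matrix.det (Mmat k z3 z2 z1) = (-1 : ℂ) ^ k * Matrix.det (Mmat k z1 z2 z3) :=
  det_Mmat_swap_general k z1 z2 z3
end

section
/- Let k ≥ 1. The coefficient of z^{k²} in the one-variable polynomial z ↦ det M(0, z, 1) equals D1 · D2, where D1 = det((1/(i+j−1))_{1 ≤ i,j ≤ k}) and D2 = det((1/(i+j+k−1))_{1 ≤ i,j ≤ k}); moreover every coefficient of z^r for r < k² in this polynomial vanishes. Equivalently, det M(0, z, 1) = D1·D2·z^{k²} + O(z^{k²+1}) near z = 0. -/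
open Finset Polynomial Matrix


lemma sum_range_card_le (T : Finset ℕ) : ∑ i ∈ Finset.range T.card, i ≤ ∑ i ∈ T, i := by
  induction T using Finset.strongInduction with
  | _ T ih =>
    rcases T.eq_empty_or_nonempty with rfl | hT
    · simp
    · have hmem := T.max'_mem hT
      have hcard : 1 ≤ T.card := Finset.card_pos.mpr hT
      have hsub : T ⊆ Finset.range (T.max' hT + 1) := fun x hx =>
        Finset.mem_range.mpr (Nat.lt_succ_of_le (T.le_max' x hx))
      have hle : T.card ≤ T.max' hT + 1 := by
        simpa using Finset.card_le_card hsub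
      have herase := ih (T.erase (T.max' hT)) (Finset.erase_ssubset hmem)
      have hcarde : (T.erase (T.max' hT)).card = T.card - 1 := Finset.card_erase_of_mem hmem
      have h1 : ∑ i ∈ Finset.range T.card, i
          = ∑ i ∈ Finset.range (T.card - 1), i + (T.card - 1) := by
        conv_lhs => rw [show T.card = (T.card - 1) + 1 by omega]
        rw [Finset.sum_range_succ]
      rw [hcarde] at herase
      have h2 := Finset.sum_erase_add T id hmem
      simp only [id] at h2
      omega

lemma sum_card_le_big (T : Finset ℕ) (m : ℕ) (hm : m ∈ T) (hc : T.card ≤ m) :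
    ∑ i ∈ Finset.range T.card, i + 1 ≤ ∑ i ∈ T, i := by
  have hcard : 1 ≤ T.card := Finset.card_pos.mpr ⟨m, hm⟩
  have herase := sum_range_card_le (T.erase m)
  have hcarde : (T.erase m).card = T.card - 1 := Finset.card_erase_of_mem hm
  have h1 : ∑ i ∈ Finset.range T.card, i
      = ∑ i ∈ Finset.range (T.card - 1), i + (T.card - 1) := by
    conv_lhs => rw [show T.card = (T.card - 1) + 1 by omega]
    rw [Finset.sum_range_succ]
  have h2 := Finset.sum_erase_add T id hm
  simp only [id] at h2
  rw [hcarde] at herase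
  omega


/-- The Cauchy determinant `D1 = det((1/(i+j-1))_{1 ≤ i,j ≤ k})` (0-based indices shown). -/
noncomputable def D1 (k : ℕ) : ℝ :=
  Matrix.det (Matrix.of fun i j : Fin k => (1 : ℝ) / (((i : ℕ) + (j : ℕ) + 1 : ℕ) : ℝ))

/-- The Cauchy determinant `D2 = det((1/(i+j+k-1))_{1 ≤ i,j ≤ k})` (0-based indices shown). -/
noncomputable def D2 (k : ℕ) : ℝ :=
  Matrix.det (Matrix.of fun i j : Fin k => (1 : ℝ) / (((i : ℕ) + (j : ℕ) + k + 1 : ℕ) : ℝ))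

noncomputable def Wmat (k : ℕ) : Matrix (Fin (2*k)) (Fin (2*k)) ℂ :=
  Matrix.of fun i j =>
    if (j:ℕ) < k then (((i:ℕ) + (j:ℕ) + 1 : ℕ) : ℂ)⁻¹
    else (((i:ℕ) + ((j:ℕ) - k) + 1 : ℕ) : ℂ)⁻¹

def ddeg (k : ℕ) (i j : Fin (2*k)) : ℕ := if (j:ℕ) < k then (i:ℕ) + (j:ℕ) + 1 else 0

noncomputable def Pmat (k : ℕ) : Matrix (Fin (2*k)) (Fin (2*k)) (Polynomial ℂ) :=
  Matrix.of fun i j => Polynomial.C (Wmat k i j) * Polynomial.X ^ (ddeg k i j)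

noncomputable def Zmat (k : ℕ) : Matrix (Fin (2*k)) (Fin (2*k)) ℂ :=
  Matrix.of fun i j => if (j:ℕ) < k ∧ k ≤ (i:ℕ) then 0 else Wmat k i j

lemma Mmat_eq_eval (k : ℕ) (z : ℂ) : Mmat k 0 z 1 = (Pmat k).map (Polynomial.eval z) := by
  ext i j
  simp only [Mmat, Pmat, Wmat, ddeg, Matrix.map_apply, Matrix.of_apply, eval_mul, eval_C,
    eval_pow, eval_X]
  by_cases h : (j:ℕ) < k
  · simp only [h, if_true, zero_pow (Nat.succ_ne_zero _)]
    ring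
  · simp only [h, if_false, zero_pow (Nat.succ_ne_zero _), one_pow, pow_zero]
    ring

lemma prod_Pmat (k : ℕ) (σ : Equiv.Perm (Fin (2*k))) :
    ∏ j, Pmat k (σ j) j
      = Polynomial.C (∏ j, Wmat k (σ j) j) * Polynomial.X ^ (∑ j, ddeg k (σ j) j) := by
  simp only [Pmat, Matrix.of_apply]
  rw [Finset.prod_mul_distrib, map_prod, Finset.prod_pow_eq_pow_sum]

section
variable (k : ℕ)

def Sset : Finset (Fin (2*k)) := Finset.univ.filter (fun (j : Fin (2*k)) => (j:ℕ) < k)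

lemma Sset_image : (Sset k).image (fun (j : Fin (2*k)) => (j:ℕ)) = Finset.range k := by
  ext x
  simp only [Sset, Finset.mem_image, Finset.mem_filter, Finset.mem_univ, true_and,
    Finset.mem_range]
  constructor
  · rintro ⟨j, hj, rfl⟩; exact hj
  · intro hx
    exact ⟨⟨x, by omega⟩, by simpa using hx, rfl⟩

lemma Sset_card : (Sset k).card = k := by
  have h1 : ((Sset k).image (fun (j : Fin (2*k)) => (j:ℕ))).card = (Sset k).card :=
    Finset.card_image_of_injOn (fun a _ b _ h => Fin.val_injective h)
  rw [Sset_image] at h1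
  simpa using h1.symm

lemma Sset_sum : ∑ j ∈ Sset k, (j:ℕ) = ∑ i ∈ Finset.range k, i := by
  rw [← Sset_image k, Finset.sum_image (fun a _ b _ h => Fin.val_injective h)]

lemma gauss : (∑ i ∈ Finset.range k, i) * 2 = k * (k - 1) := Finset.sum_range_id_mul_two k

lemma gauss2 : 2 * (∑ i ∈ Finset.range k, i) + k = k ^ 2 := by
  have h := gauss k
  rcases Nat.eq_zero_or_pos k with rfl | hk
  · simp
  · obtain ⟨m, rfl⟩ := Nat.exists_eq_add_of_le hk
    have : (1 + m) - 1 = m := by omega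
    rw [this] at h
    nlinarith [h]

def esum (σ : Equiv.Perm (Fin (2*k))) : ℕ := ∑ j, ddeg k (σ j) j

lemma esum_eq (σ : Equiv.Perm (Fin (2*k))) :
    esum k σ = (∑ j ∈ Sset k, (σ j : ℕ)) + (∑ i ∈ Finset.range k, i) + k := by
  have : esum k σ = ∑ j ∈ Sset k, ((σ j : ℕ) + (j:ℕ) + 1) := by
    rw [esum, Sset, Finset.sum_filter]
    exact Finset.sum_congr rfl fun j _ => by by_cases h : (j:ℕ) < k <;> simp [ddeg, h]
  rw [this, Finset.sum_add_distrib, Finset.sum_add_distrib, Sset_sum]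
  simp [Sset_card]

lemma perm_inj_image (σ : Equiv.Perm (Fin (2*k))) :
    ∑ j ∈ Sset k, (σ j : ℕ) = ∑ x ∈ (Sset k).image (fun (j : Fin (2*k)) => (σ j : ℕ)), x := by
  rw [Finset.sum_image (fun a _ b _ h => σ.injective (Fin.val_injective h))]

lemma image_card (σ : Equiv.Perm (Fin (2*k))) :
    ((Sset k).image (fun (j : Fin (2*k)) => (σ j : ℕ))).card = k := by
  rw [Finset.card_image_of_injOn (fun a _ b _ h => σ.injective (Fin.val_injective h)),
    Sset_card]

lemma esum_of_pres (σ : Equiv.Perm (Fin (2*k)))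
    (hσ : ∀ j : Fin (2*k), (j:ℕ) < k → (σ j : ℕ) < k) : esum k σ = k ^ 2 := by
  have himg : (Sset k).image (fun (j : Fin (2*k)) => (σ j : ℕ)) = Finset.range k := by
    apply Finset.eq_of_subset_of_card_le
    · intro x hx
      simp only [Finset.mem_image, Sset, Finset.mem_filter, Finset.mem_univ, true_and] at hx
      obtain ⟨j, hj, rfl⟩ := hx
      exact Finset.mem_range.mpr (hσ j hj)
    · rw [image_card]; simp
  have h1 : ∑ j ∈ Sset k, (σ j : ℕ) = ∑ i ∈ Finset.range k, i := by
    rw [perm_inj_image, himg]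
  have h2 := gauss2 k
  rw [esum_eq, h1]
  omega

lemma esum_of_not_pres (σ : Equiv.Perm (Fin (2*k)))
    (hσ : ¬ ∀ j : Fin (2*k), (j:ℕ) < k → (σ j : ℕ) < k) : k ^ 2 + 1 ≤ esum k σ := by
  push_neg at hσ
  obtain ⟨j₀, hj₀, hbig⟩ := hσ
  have hmem : (σ j₀ : ℕ) ∈ (Sset k).image (fun (j : Fin (2*k)) => (σ j : ℕ)) :=
    Finset.mem_image_of_mem _ (by simp [Sset, hj₀])
  have hcard : ((Sset k).image (fun (j : Fin (2*k)) => (σ j : ℕ))).card ≤ (σ j₀ : ℕ) := by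
    rw [image_card]; omega
  have hbig2 := sum_card_le_big _ _ hmem hcard
  rw [image_card] at hbig2
  have h1 := perm_inj_image k σ
  have h2 := gauss2 k
  rw [esum_eq]
  omega

lemma esum_ge (σ : Equiv.Perm (Fin (2*k))) : k ^ 2 ≤ esum k σ := by
  by_cases h : ∀ j : Fin (2*k), (j:ℕ) < k → (σ j : ℕ) < k
  · exact (esum_of_pres k σ h).ge
  · exact le_trans (by omega) (esum_of_not_pres k σ h)

end

section
variable (k : ℕ)

lemma coeff_det_term (σ : Equiv.Perm (Fin (2*k))) (d : ℕ) :
    ((((Equiv.Perm.sign σ : ℤ) : Polynomial ℂ)) * ∏ j, Pmat k (σ j) j).coeff d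
      = ((Equiv.Perm.sign σ : ℤ) : ℂ) * (∏ j, Wmat k (σ j) j) * (if d = esum k σ then 1 else 0) := by
  rw [prod_Pmat, ← Polynomial.C_eq_intCast, ← mul_assoc, ← Polynomial.C_mul,
    Polynomial.coeff_C_mul, Polynomial.coeff_X_pow]
  rfl

lemma coeff_det_lt (d : ℕ) (hd : d < k ^ 2) : ((Pmat k).det).coeff d = 0 := by
  rw [Matrix.det_apply', Polynomial.finset_sum_coeff]
  refine Finset.sum_eq_zero fun σ _ => ?_
  rw [coeff_det_term]
  have : d ≠ esum k σ := by have := esum_ge k σ; omega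
  simp [this]

lemma coeff_det_eq : ((Pmat k).det).coeff (k ^ 2) = (Zmat k).det := by
  rw [Matrix.det_apply', Polynomial.finset_sum_coeff, Matrix.det_apply' (Zmat k)]
  refine Finset.sum_congr rfl fun σ _ => ?_
  rw [coeff_det_term]
  by_cases h : ∀ j : Fin (2*k), (j:ℕ) < k → (σ j : ℕ) < k
  · have he : k ^ 2 = esum k σ := (esum_of_pres k σ h).symm
    have hw : ∏ j, Wmat k (σ j) j = ∏ j, Zmat k (σ j) j := by
      refine Finset.prod_congr rfl fun j _ => ?_
      by_cases hj : (j:ℕ) < k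
      · have : ¬ ((j:ℕ) < k ∧ k ≤ ((σ j):ℕ)) := by
          have := h j hj; omega
        simp [Zmat, this]
      · simp [Zmat, hj]
    simp [he, hw, mul_assoc]
  · have he : k ^ 2 ≠ esum k σ := by have := esum_of_not_pres k σ h; omega
    push_neg at h
    obtain ⟨j₀, hj₀, hbig⟩ := h
    have hz : Zmat k (σ j₀) j₀ = 0 := by simp [Zmat, hj₀, hbig]
    rw [show (∏ i, Zmat k (σ i) i) = 0 from Finset.prod_eq_zero (Finset.mem_univ j₀) hz]
    simp [he]

lemma det_Zmat : (Zmat k).det = ((D1 k * D2 k : ℝ) : ℂ) := by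
  let ee : Fin k ⊕ Fin k ≃ Fin (2*k) := finSumFinEquiv.trans (finCongr (two_mul k).symm)
  have hval_l : ∀ i : Fin k, ((ee (Sum.inl i) : ℕ)) = (i:ℕ) := by
    intro i; simp [ee]
  have hval_r : ∀ i : Fin k, ((ee (Sum.inr i) : ℕ)) = k + (i:ℕ) := by
    intro i; simp [ee]; omega
  have hsub : (Zmat k).submatrix ee ee =
      Matrix.fromBlocks
        (Matrix.of fun i j : Fin k => (((i:ℕ)+(j:ℕ)+1 : ℕ):ℂ)⁻¹)
        (Matrix.of fun i j : Fin k => (((i:ℕ)+(j:ℕ)+1 : ℕ):ℂ)⁻¹)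
        0
        (Matrix.of fun i j : Fin k => (((i:ℕ)+(j:ℕ)+k+1 : ℕ):ℂ)⁻¹) := by
    ext p q
    rcases p with i | i <;> rcases q with j | j <;>
      simp only [Matrix.submatrix_apply, Zmat, Wmat, Matrix.of_apply, hval_l, hval_r,
        Matrix.fromBlocks_apply₁₁, Matrix.fromBlocks_apply₁₂, Matrix.fromBlocks_apply₂₁,
        Matrix.fromBlocks_apply₂₂, Matrix.zero_apply]
    · have h1 : (j:ℕ) < k := j.isLt
      have h2 : ¬ k ≤ (i:ℕ) := by omega
      simp [h1, h2, i.isLt]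
    · have h1 : ¬ (k + (j:ℕ)) < k := by omega
      have h2 : k + (j:ℕ) - k = (j:ℕ) := by omega
      simp [h1, h2]
    · have h1 : (j:ℕ) < k := j.isLt
      have h2 : k ≤ k + (i:ℕ) := by omega
      simp [h1, h2]
    · have h1 : ¬ (k + (j:ℕ)) < k := by omega
      have h2 : k + (i:ℕ) + (k + (j:ℕ) - k) + 1 = (i:ℕ) + (j:ℕ) + k + 1 := by omega
      simp only [h1, if_false, h2, false_and]
  have hdet := Matrix.det_submatrix_equiv_self ee (Zmat k)
  rw [← hdet, hsub, Matrix.det_fromBlocks_zero₂₁]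
  have h1 : (Matrix.of fun i j : Fin k => (((i:ℕ)+(j:ℕ)+1 : ℕ):ℂ)⁻¹).det = ((D1 k : ℝ):ℂ) := by
    rw [D1, ← Complex.ofRealHom_eq_coe, RingHom.map_det Complex.ofRealHom]
    congr 1
    ext i j
    simp only [RingHom.mapMatrix_apply, Matrix.map_apply, Matrix.of_apply, Complex.ofRealHom_eq_coe]
    push_cast
    rw [one_div]
  have h2 : (Matrix.of fun i j : Fin k => (((i:ℕ)+(j:ℕ)+k+1 : ℕ):ℂ)⁻¹).det = ((D2 k : ℝ):ℂ) := by
    rw [D2, ← Complex.ofRealHom_eq_coe, RingHom.map_det Complex.ofRealHom]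
    congr 1
    ext i j
    simp only [RingHom.mapMatrix_apply, Matrix.map_apply, Matrix.of_apply, Complex.ofRealHom_eq_coe]
    push_cast
    rw [one_div]
  rw [h1, h2]
  push_cast
  ring

end

theorem det_Mmat_leading_coeff (k : ℕ) (hk : 1 ≤ k) :
    ∃ g : Polynomial ℂ, ∀ z : ℂ,
      Matrix.det (Mmat k 0 z 1) =
        ((D1 k * D2 k : ℝ) : ℂ) * z ^ (k ^ 2) + z ^ (k ^ 2 + 1) * g.eval z := by
  set c : ℂ := ((D1 k * D2 k : ℝ) : ℂ) with hc
  have hdvd : Polynomial.X ^ (k ^ 2 + 1) ∣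
      ((Pmat k).det - Polynomial.C c * Polynomial.X ^ (k ^ 2)) := by
    rw [Polynomial.X_pow_dvd_iff]
    intro d hd
    rw [Polynomial.coeff_sub, Polynomial.coeff_C_mul, Polynomial.coeff_X_pow]
    by_cases h : d = k ^ 2
    · subst h
      rw [coeff_det_eq, det_Zmat]
      simp [hc]
    · have hdlt : d < k ^ 2 := by omega
      rw [coeff_det_lt k d hdlt]
      simp [h]
  obtain ⟨g, hg⟩ := hdvd
  refine ⟨g, fun z => ?_⟩
  have hM : (Mmat k 0 z 1).det = Polynomial.eval z ((Pmat k).det) := by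
    rw [Mmat_eq_eval k z]
    have h := RingHom.map_det (Polynomial.evalRingHom z) (Pmat k)
    rw [RingHom.mapMatrix_apply] at h
    simpa using h.symm
  have hP : (Pmat k).det
      = Polynomial.C c * Polynomial.X ^ (k ^ 2) + Polynomial.X ^ (k ^ 2 + 1) * g := by
    rw [← hg]; ring
  rw [hM, hP, Polynomial.eval_add, Polynomial.eval_mul, Polynomial.eval_mul,
    Polynomial.eval_C, Polynomial.eval_pow, Polynomial.eval_pow, Polynomial.eval_X]
end
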